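/- Let a, b, c be positive integers with a ≤ b, both a and b odd, c even, a² + b² < c², and (a,b,c) ≠ (1,1,2). Then S(a,b,c) < 8π(a + b + c − 4 + π/√3). -/
import Mathlib


open Real

/-- Complete elliptic integral of the first kind. -/
noncomputable def completeEllipticK (k : ℝ) : ℝ :=
  ∫ θ in (0:ℝ)..(π/2), 1 / Real.sqrt (1 - k^2 * Real.sin θ ^ 2)

/-- Complete elliptic integral of the second kind. -/
noncomputable def completeEllipticE (k : ℝ) : ℝ :=
  ∫ θ in (0:ℝ)..(π/2), Real.sqrt (1 - k^2 * Real.sin θ ^ 2)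

/-- The area `S(a,b,c)` of the generalized Lawson surface `T_{a,b,c}`. -/
noncomputable def lawsonArea (a b c : ℝ) : ℝ :=
  4 * π / Real.sqrt (c^2 - a^2) *
    (2 * (c^2 - a^2) * completeEllipticE (Real.sqrt ((b^2 - a^2) / (c^2 - a^2)))
      - (c^2 - a^2 - b^2) * completeEllipticK (Real.sqrt ((b^2 - a^2) / (c^2 - a^2))))

/-- The second elliptic integral is at most `π/2`, since its integrand is at most `1`. -/
lemma myE_le (k : ℝ) : completeEllipticE k ≤ π/2 := by
  have h : completeEllipticE k ≤ ∫ _θ in (0:ℝ)..(π/2), (1:ℝ) := by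
    apply intervalIntegral.integral_mono_on (by positivity : (0:ℝ) ≤ π/2)
    · exact Continuous.intervalIntegrable
        ((continuous_const.sub (continuous_const.mul (Real.continuous_sin.pow 2))).sqrt) _ _
    · exact intervalIntegrable_const
    · intro θ _
      exact Real.sqrt_le_one.mpr (by nlinarith [sq_nonneg (k * Real.sin θ)])
  simpa using h

/-- The first elliptic integral is at least `π/2` when `k² < 1`. -/
lemma myK_ge (k : ℝ) (hk : k^2 < 1) : π/2 ≤ completeEllipticK k := by
  have hpos : ∀ θ : ℝ, 0 < 1 - k^2 * Real.sin θ ^ 2 := by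
    intro θ
    nlinarith [Real.sin_sq_le_one θ, sq_nonneg k, sq_nonneg (Real.sin θ)]
  have hcont : Continuous fun θ : ℝ => 1 / Real.sqrt (1 - k^2 * Real.sin θ ^ 2) :=
    continuous_const.div
      ((continuous_const.sub (continuous_const.mul (Real.continuous_sin.pow 2))).sqrt)
      (fun θ => (Real.sqrt_pos.mpr (hpos θ)).ne')
  have h : (∫ _θ in (0:ℝ)..(π/2), (1:ℝ)) ≤ completeEllipticK k := by
    apply intervalIntegral.integral_mono_on (by positivity : (0:ℝ) ≤ π/2)
    · exact intervalIntegrable_const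
    · exact hcont.intervalIntegrable _ _
    · intro θ _
      rw [le_div_iff₀ (Real.sqrt_pos.mpr (hpos θ)), one_mul]
      exact Real.sqrt_le_one.mpr (by nlinarith [sq_nonneg (k * Real.sin θ)])
  simpa using h

/-- Arithmetic: apart from `(1,1,2)` and `(1,1,4)`, one has `b + c ≥ 7`. -/
lemma bc_ge (a b c : ℕ) (ha : 0 < a) (hab : a ≤ b) (haodd : Odd a) (hbodd : Odd b)
    (hceven : Even c) (hlt : a^2 + b^2 < c^2) (hne : ¬(a = 1 ∧ b = 1 ∧ c = 2))
    (h114 : ¬(a = 1 ∧ b = 1 ∧ c = 4)) : 7 ≤ b + c := by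
  by_contra hcon
  push_neg at hcon
  have hlt' : a * a + b * b < c * c := by nlinarith
  have hb6 : b ≤ 6 := by omega
  have ha6 : a ≤ 6 := by omega
  have hc6 : c ≤ 6 := by omega
  rw [Nat.odd_iff] at haodd hbodd
  rw [Nat.even_iff] at hceven
  interval_cases a <;> interval_cases b <;> interval_cases c <;> omega

/-- The key real-number estimate. -/
lemma main_est (A B C u : ℝ) (hA : 1 ≤ A) (hB : 1 ≤ B)
    (hu2 : u^2 = C^2 - A^2) (hu0 : 0 < u) (hC0 : 0 < C) (hltR : A^2 + B^2 < C^2)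
    (h : 7 ≤ B + C ∨ (A = 1 ∧ B = 1 ∧ C = 4)) :
    π * (u + B^2 / u) < 4 * (A + B + C - 4 + π / Real.sqrt 3) := by
  have hπ := Real.pi_pos
  have hπu := Real.pi_lt_d2
  have hπl := Real.pi_gt_d6
  have hs3 : Real.sqrt 3 ^ 2 = 3 := Real.sq_sqrt (by norm_num)
  have hs30 : 0 < Real.sqrt 3 := Real.sqrt_pos.mpr (by norm_num)
  have hs3l : (1.7:ℝ) < Real.sqrt 3 := by nlinarith
  have hs3u : Real.sqrt 3 < (1.8:ℝ) := by nlinarith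
  have hπs3 : π / Real.sqrt 3 = π * Real.sqrt 3 / 3 := by
    rw [div_eq_div_iff hs30.ne' (by norm_num : (3:ℝ) ≠ 0)]
    linear_combination -π * hs3
  rcases h with hbc | ⟨h1, h2, h3⟩
  · have huc : u < C := by nlinarith
    have hbu : B < u := by nlinarith
    have hdiv : B^2 / u < B := by
      rw [div_lt_iff₀ hu0]
      nlinarith
    have hT : u + B^2 / u < B + C := by linarith
    have key : π * (B + C) ≤ 4 * (A + B + C - 4 + π / Real.sqrt 3) := by
      rw [hπs3]
      nlinarith [mul_nonneg (by linarith : (0:ℝ) ≤ 4 - π) (by linarith : (0:ℝ) ≤ B + C - 7),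
        mul_le_mul (le_of_lt hπl) (le_of_lt hs3l) (by norm_num) (by linarith)]
    calc π * (u + B^2 / u) < π * (B + C) := mul_lt_mul_of_pos_left hT hπ
      _ ≤ _ := key
  · subst h1; subst h2; subst h3
    have hu15 : u^2 = 15 := by rw [hu2]; norm_num
    have hul : (3.8:ℝ) < u := by nlinarith
    have huu : u < (3.9:ℝ) := by nlinarith
    have hqi : (1:ℝ)^2 / u = u / 15 := by
      rw [div_eq_div_iff hu0.ne' (by norm_num : (15:ℝ) ≠ 0)]
      linear_combination -hu15
    rw [hπs3, hqi]
    nlinarith [mul_pos hπ hs30, mul_pos hπ hu0,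
      mul_nonneg (by linarith : (0:ℝ) ≤ 3.15 - π) (by linarith : (0:ℝ) ≤ 3.9 - u),
      mul_le_mul (le_of_lt hπl) (le_of_lt hs3l) (by norm_num) (by linarith)]

/-- For positive integers `a ≤ b` both odd, `c` even, `a² + b² < c²`, and
`(a,b,c) ≠ (1,1,2)`, one has `S(a,b,c) < 8π(a+b+c−4+π/√3)`. -/
theorem lawsonArea_lt_of_both_odd (a b c : ℕ) (ha : 0 < a) (hb : 0 < b) (hc : 0 < c)
    (hab : a ≤ b) (haodd : Odd a) (hbodd : Odd b) (hceven : Even c)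
    (hlt : a^2 + b^2 < c^2) (hne : (a, b, c) ≠ (1, 1, 2)) :
    lawsonArea a b c < 8 * π * ((a:ℝ) + b + c - 4 + π / Real.sqrt 3) := by
  have hπ := Real.pi_pos
  have hA : (1:ℝ) ≤ (a:ℝ) := by exact_mod_cast ha
  have hB : (1:ℝ) ≤ (b:ℝ) := by exact_mod_cast hb
  have hC : (1:ℝ) ≤ (c:ℝ) := by exact_mod_cast hc
  have hltR : (a:ℝ)^2 + (b:ℝ)^2 < (c:ℝ)^2 := by exact_mod_cast hlt
  have habR : (a:ℝ) ≤ b := by exact_mod_cast hab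
  have hba : (a:ℝ)^2 ≤ (b:ℝ)^2 := by nlinarith
  have hca : (a:ℝ)^2 < (c:ℝ)^2 := by nlinarith
  have hcb : (b:ℝ)^2 < (c:ℝ)^2 := by nlinarith
  set u : ℝ := Real.sqrt ((c:ℝ)^2 - (a:ℝ)^2) with hu_def
  have hu2 : u^2 = (c:ℝ)^2 - (a:ℝ)^2 := Real.sq_sqrt (by linarith)
  have hu0 : 0 < u := Real.sqrt_pos.mpr (by linarith)
  set k : ℝ := Real.sqrt (((b:ℝ)^2 - (a:ℝ)^2) / ((c:ℝ)^2 - (a:ℝ)^2)) with hk_def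
  have hk2 : k^2 = ((b:ℝ)^2 - (a:ℝ)^2) / ((c:ℝ)^2 - (a:ℝ)^2) :=
    Real.sq_sqrt (div_nonneg (by linarith) (by linarith))
  have hk1 : k^2 < 1 := by
    rw [hk2, div_lt_one (by linarith)]
    linarith
  have hE := myE_le k
  have hK := myK_ge k hk1
  -- bound the inner bracket
  have hinner : 2 * ((c:ℝ)^2 - (a:ℝ)^2) * completeEllipticE k
      - ((c:ℝ)^2 - (a:ℝ)^2 - (b:ℝ)^2) * completeEllipticK k
      ≤ (π/2) * (u^2 + (b:ℝ)^2) := by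
    have h1 : 2 * ((c:ℝ)^2 - (a:ℝ)^2) * completeEllipticE k
        ≤ 2 * ((c:ℝ)^2 - (a:ℝ)^2) * (π/2) :=
      mul_le_mul_of_nonneg_left hE (by nlinarith)
    have h2 : ((c:ℝ)^2 - (a:ℝ)^2 - (b:ℝ)^2) * (π/2)
        ≤ ((c:ℝ)^2 - (a:ℝ)^2 - (b:ℝ)^2) * completeEllipticK k :=
      mul_le_mul_of_nonneg_left hK (by nlinarith)
    rw [hu2]
    linarith
  have hS : lawsonArea a b c ≤ 4 * π / u * ((π/2) * (u^2 + (b:ℝ)^2)) := by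
    have h4 : 0 ≤ 4 * π / u := by positivity
    calc lawsonArea a b c
        = 4 * π / u * (2 * ((c:ℝ)^2 - (a:ℝ)^2) * completeEllipticE k
          - ((c:ℝ)^2 - (a:ℝ)^2 - (b:ℝ)^2) * completeEllipticK k) := rfl
      _ ≤ 4 * π / u * ((π/2) * (u^2 + (b:ℝ)^2)) := mul_le_mul_of_nonneg_left hinner h4
  have hEq : 4 * π / u * ((π/2) * (u^2 + (b:ℝ)^2)) = 2 * π * (π * (u + (b:ℝ)^2 / u)) := by
    field_simp
    ring
  have hdisj : 7 ≤ (b:ℝ) + c ∨ ((a:ℝ) = 1 ∧ (b:ℝ) = 1 ∧ (c:ℝ) = 4) := by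
    by_cases h114 : a = 1 ∧ b = 1 ∧ c = 4
    · right
      obtain ⟨p1, p2, p3⟩ := h114
      refine ⟨?_, ?_, ?_⟩ <;> [rw [p1]; rw [p2]; rw [p3]] <;> norm_num
    · left
      have hne' : ¬(a = 1 ∧ b = 1 ∧ c = 2) := by
        intro ⟨p1, p2, p3⟩; exact hne (by rw [p1, p2, p3])
      have := bc_ge a b c ha hab haodd hbodd hceven hlt hne' h114
      exact_mod_cast this
  have hmain : π * (u + (b:ℝ)^2 / u) < 4 * ((a:ℝ) + b + c - 4 + π / Real.sqrt 3) :=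
    main_est (a:ℝ) (b:ℝ) (c:ℝ) u hA hB hu2 hu0 (by linarith) hltR hdisj
  calc lawsonArea a b c ≤ 2 * π * (π * (u + (b:ℝ)^2 / u)) := by rw [← hEq]; exact hS
    _ < 2 * π * (4 * ((a:ℝ) + b + c - 4 + π / Real.sqrt 3)) :=
        mul_lt_mul_of_pos_left hmain (by positivity)
    _ = 8 * π * ((a:ℝ) + b + c - 4 + π / Real.sqrt 3) := by ring
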